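/- Let Γ be a saturated precolored convex Θ^3-drawing of a graph G on n ≥ 4 vertices with coloring φ. Then for each color c ∈ {1,2,3}, the number of inner edges of color c is at least (n − 4)/2, i.e., 2·|{e ∈ E(G) : φ(e) = c and e is an inner edge}| ≥ n − 4. -/

import Mathlib

/-- Points of the plane. -/
abbrev Pt : Type := ℝ × ℝ

/-- Two straight-line segments cross if some point lies in the interior
(open segment) of both. -/
def SegCross (a b c d : Pt) : Prop :=
  ∃ x : Pt, x ∈ openSegment ℝ a b ∧ x ∈ openSegment ℝ c d

/-- Two edges (unordered pairs of vertices) cross in the drawing `p`. -/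
def EdgeCross {V : Type} (p : V → Pt) (e f : Sym2 V) : Prop :=
  ∃ u v x y : V, e = s(u, v) ∧ f = s(x, y) ∧ SegCross (p u) (p v) (p x) (p y)

/-- The drawing `p` is injective and no three vertex points are collinear. -/
def GenPos {V : Type} (p : V → Pt) : Prop :=
  Function.Injective p ∧
    ∀ u v w : V, u ≠ v → u ≠ w → v ≠ w → ¬ Collinear ℝ ({p u, p v, p w} : Set Pt)

/-- The vertex points are in convex position: every vertex point is an extreme
point of the convex hull of all vertex points. -/
def ConvexPos {V : Type} (p : V → Pt) : Prop :=
  ∀ v : V, p v ∈ Set.extremePoints ℝ (convexHull ℝ (Set.range p))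

/-- A `k`-coloring of the edges of `G` is crossing-free if no two distinct
edges of the same color cross. -/
def CrossingFree {V : Type} {k : ℕ} (G : SimpleGraph V) (p : V → Pt)
    (φ : Sym2 V → Fin k) : Prop :=
  ∀ e ∈ G.edgeSet, ∀ f ∈ G.edgeSet, e ≠ f → φ e = φ f → ¬ EdgeCross p e f

open scoped Classical

/-- A precolored drawing `(G, p, φ)` is saturated: for every pair of distinct
non-adjacent vertices and every color `c`, assigning color `c` to the new edge
`uv` yields a coloring that is not crossing-free. -/
def PrecoloredSaturated {V : Type} {k : ℕ} (G : SimpleGraph V) (p : V → Pt)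
    (φ : Sym2 V → Fin k) : Prop :=
  ∀ u v : V, u ≠ v → ¬ G.Adj u v → ∀ c : Fin k,
    ¬ CrossingFree (G ⊔ SimpleGraph.fromEdgeSet {s(u, v)}) p
      (fun e => if e = s(u, v) then c else φ e)

/-- A (non-precolored) drawing of `G` is saturated for thickness `k`: for every
pair of distinct non-adjacent vertices `u, v`, the drawing of `G + uv` admits
no crossing-free `k`-coloring. -/
def Saturated {V : Type} (k : ℕ) (G : SimpleGraph V) (p : V → Pt) : Prop :=
  ∀ u v : V, u ≠ v → ¬ G.Adj u v →
    ∀ φ : Sym2 V → Fin k,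
      ¬ CrossingFree (G ⊔ SimpleGraph.fromEdgeSet {s(u, v)}) p φ

/-- Twice the signed area of the triangle `a b c`. -/
def det2 (a b c : Pt) : ℝ :=
  (b.1 - a.1) * (c.2 - a.2) - (b.2 - a.2) * (c.1 - a.1)

/-- An edge is an outer edge if its endpoints are consecutive on the boundary
of the convex hull of the vertex points, i.e. all other vertex points lie
strictly on one side of the line through its endpoints. -/
def IsOuterEdge {V : Type} (p : V → Pt) (e : Sym2 V) : Prop :=
  ∃ u v : V, e = s(u, v) ∧
    ((∀ w : V, w ≠ u → w ≠ v → 0 < det2 (p u) (p v) (p w)) ∨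
     (∀ w : V, w ≠ u → w ≠ v → det2 (p u) (p v) (p w) < 0))

/-!
Fix a colour `c`. Call `a, b ∈ W` a chord of a vertex set `W` if `W` has points strictly on both
sides of the line `ab`. Saturation says that every non-edge is crossed by an edge of colour `c`,
i.e. by a `c`-coloured chord of `W = V`. We show `|W| ≤ 2 #(c-coloured chords of W) + 4` by
induction on `W`, keeping this crossing property.

If `W` has no `c`-coloured chord, every chord of `W` is an edge of one of the two other colours.
Five points of `W` in convex position would span five diagonals, each crossing the next one
cyclically: an odd cycle that cannot be coloured with two colours. Hence `|W| ≤ 4`.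

Otherwise pick a `c`-coloured chord `xy` with the fewest points `S` of `W` on its positive side.
By minimality no `c`-coloured chord of `W` has an endpoint in `S`: such a chord would either cross
`xy` or cut off a smaller side. The pentagon argument on `S ∪ {x, y}` then gives `|S| ≤ 2`, and
`W \ S` keeps the crossing property while losing the chord `xy`.
-/

lemma det2_add_det2_add_det2 (A B C D : Pt) :
    det2 D B C + det2 A D C + det2 A B D = det2 A B C := by
  unfold det2; ring

/-- Cramer's rule: the barycentric coordinates of `D` with respect to `A, B, C`. -/
lemma det2_smul_eq (A B C D : Pt) :
    det2 A B C • D = det2 D B C • A + det2 A D C • B + det2 A B D • C := by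
  ext <;> simp [det2] <;> ring

lemma eq_add_smul_sub_of_det2_eq_zero {A B C : Pt} (hAB : A ≠ B) (h : det2 A B C = 0) :
    ∃ r : ℝ, C = A + r • (B - A) := by
  unfold det2 at h
  by_cases h1 : B.1 = A.1
  · have h2 : B.2 - A.2 ≠ 0 := fun h2 => hAB (Prod.ext h1 (by linarith)).symm
    have hC : C.1 = A.1 := by
      rw [h1, sub_self, zero_mul, zero_sub, neg_eq_zero] at h
      linarith [(mul_eq_zero.mp h).resolve_left h2]
    refine ⟨(C.2 - A.2) / (B.2 - A.2), Prod.ext ?_ ?_⟩ <;> simp [h1, hC]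
    field_simp; ring
  · have h2 : B.1 - A.1 ≠ 0 := sub_ne_zero.mpr h1
    refine ⟨(C.1 - A.1) / (B.1 - A.1), Prod.ext ?_ ?_⟩ <;> simp <;> field_simp
    · ring
    · linarith

lemma mem_convexHull_triple_of_det2_nonneg {A B C D : Pt} (h : 0 < det2 A B C)
    (hA : 0 ≤ det2 D B C) (hB : 0 ≤ det2 A D C) (hC : 0 ≤ det2 A B D) :
    D ∈ convexHull ℝ {A, B, C} := by
  have hD : D = (det2 D B C / det2 A B C) • A + (det2 A D C / det2 A B C) • B +
      (det2 A B D / det2 A B C) • C := by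
    rw [div_eq_inv_mul, div_eq_inv_mul, div_eq_inv_mul, mul_smul, mul_smul, mul_smul,
      ← smul_add, ← smul_add, ← det2_smul_eq, smul_smul, inv_mul_cancel₀ h.ne', one_smul]
  have := (convex_convexHull ℝ ({A, B, C} : Set Pt)).sum_mem (t := Finset.univ)
    (w := ![det2 D B C / det2 A B C, det2 A D C / det2 A B C, det2 A B D / det2 A B C])
    (z := ![A, B, C]) ?_ ?_ ?_
  · simpa [Fin.sum_univ_three, ← hD] using this
  · intro i _; fin_cases i <;> simp <;> positivity
  · simp [Fin.sum_univ_three]; field_simp; linarith [det2_add_det2_add_det2 A B C D]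
  · intro i _; fin_cases i <;> simp <;> apply subset_convexHull <;> simp

lemma det2_of_mem_openSegment {A B X : Pt} (P Q : Pt) (hX : X ∈ openSegment ℝ A B) :
    ∃ s t : ℝ, 0 < s ∧ 0 < t ∧ det2 P Q X = s * det2 P Q A + t * det2 P Q B := by
  obtain ⟨s, t, hs, ht, hst, rfl⟩ := hX
  refine ⟨s, t, hs, ht, ?_⟩
  obtain rfl : t = 1 - s := by linarith
  simp [det2]; ring

lemma SegCross.symm {A B C D : Pt} (h : SegCross A B C D) : SegCross C D A B :=
  let ⟨x, hAB, hCD⟩ := h; ⟨x, hCD, hAB⟩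

lemma SegCross.swap_left {A B C D : Pt} (h : SegCross A B C D) : SegCross B A C D :=
  let ⟨x, hAB, hCD⟩ := h; ⟨x, openSegment_symm ℝ A B ▸ hAB, hCD⟩

lemma SegCross.det2_pos_or_det2_pos {A B C D : Pt} (P Q : Pt) (h : SegCross A B C D)
    (hA : 0 ≤ det2 P Q A) (hB : 0 ≤ det2 P Q B) (hAB : 0 < det2 P Q A ∨ 0 < det2 P Q B) :
    0 < det2 P Q C ∨ 0 < det2 P Q D := by
  obtain ⟨x, hxAB, hxCD⟩ := h
  obtain ⟨s, t, hs, ht, hx⟩ := det2_of_mem_openSegment P Q hxAB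
  obtain ⟨s', t', hs', ht', hx'⟩ := det2_of_mem_openSegment P Q hxCD
  have : 0 < det2 P Q x := by
    rcases hAB with h | h <;> rw [hx] <;> nlinarith [mul_nonneg hs.le hA, mul_nonneg ht.le hB]
  by_contra! hCD
  nlinarith [mul_nonpos_of_nonneg_of_nonpos hs'.le hCD.1,
    mul_nonpos_of_nonneg_of_nonpos ht'.le hCD.2]

lemma det2_smul_sub_det2_smul (A B U W : Pt) :
    det2 U W A • B - det2 U W B • A = det2 A B W • U - det2 A B U • W := by
  ext <;> simp [det2] <;> ring

section Drawing

variable {V : Type} {p : V → Pt}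

def orient (p : V → Pt) (a b c : V) : ℝ := det2 (p a) (p b) (p c)

lemma orient_rotate (a b c : V) : orient p a b c = orient p b c a := by
  unfold orient det2; ring

lemma orient_swap_left (a b c : V) : orient p a b c = -orient p b a c := by
  unfold orient det2; ring

lemma orient_swap_right (a b c : V) : orient p a b c = -orient p a c b := by
  unfold orient det2; ring

@[simp] lemma orient_self_left (a c : V) : orient p a a c = 0 := by
  simp [orient, det2]

@[simp] lemma orient_self_right (a b : V) : orient p a b b = 0 := by
  unfold orient det2; ring

@[simp] lemma orient_self_outer (a b : V) : orient p a b a = 0 := by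
  unfold orient det2; ring

lemma ne_of_orient_ne_zero {a b c : V} (h : orient p a b c ≠ 0) :
    a ≠ b ∧ a ≠ c ∧ b ≠ c := by
  refine ⟨?_, ?_, ?_⟩ <;> rintro rfl <;> simp at h

lemma GenPos.orient_ne_zero (hgen : GenPos p) {a b c : V} (hab : a ≠ b) (hac : a ≠ c)
    (hbc : b ≠ c) : orient p a b c ≠ 0 := by
  intro h
  obtain ⟨r, hr⟩ := eq_add_smul_sub_of_det2_eq_zero (hgen.1.ne hbc)
    (show det2 (p b) (p c) (p a) = 0 by rw [← h]; unfold orient det2; ring)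
  refine hgen.2 a b c hab hac hbc (collinear_insert_of_mem_affineSpan_pair ?_)
  convert AffineMap.lineMap_mem_affineSpan_pair r (p b) (p c) using 1
  rw [AffineMap.lineMap_apply, hr, vsub_eq_sub, vadd_eq_add, add_comm]

lemma GenPos.eq_or_eq_of_orient_eq_zero (hgen : GenPos p) {a b c : V} (hab : a ≠ b)
    (h : orient p a b c = 0) : c = a ∨ c = b := by
  by_contra! hc
  exact hgen.orient_ne_zero hab hc.1.symm hc.2.symm h

lemma ConvexPos.orient_neg_of_pos_of_pos (hconv : ConvexPos p) {a b c d : V}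
    (hbc : 0 < orient p d b c) (hac : 0 < orient p a d c) : orient p a b d < 0 := by
  by_contra! hab
  -- then `p d` lies in the triangle `p a, p b, p c`, so it is not extreme
  have hsum := det2_add_det2_add_det2 (p a) (p b) (p c) (p d)
  have hmem := mem_convexHull_triple_of_det2_nonneg (by unfold orient at *; linarith)
    hbc.le hac.le hab
  have hext := inter_extremePoints_subset_extremePoints_of_subset
    (convexHull_mono (s := {p a, p b, p c}) (t := Set.range p) (by
      rintro _ (rfl | rfl | rfl) <;> exact Set.mem_range_self _)) ⟨hmem, hconv d⟩
  have hd := extremePoints_convexHull_subset hext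
  simp only [Set.mem_insert_iff, Set.mem_singleton_iff] at hd
  rcases hd with h | h | h <;> simp [orient, det2, h] at hbc hac

lemma ConvexPos.orient_neg_and_orient_pos (hconv : ConvexPos p) {u v a b : V}
    (ha : 0 < orient p u v a) (hb : orient p u v b < 0) :
    orient p a b u < 0 ∧ 0 < orient p a b v := by
  have hub : 0 < orient p u b v := by rw [orient_swap_right]; linarith
  have hav : 0 < orient p a u v := by rwa [orient_rotate]
  refine ⟨hconv.orient_neg_of_pos_of_pos hub hav, ?_⟩
  have h := hconv.orient_neg_of_pos_of_pos (a := b) (b := a) (c := u) (d := v)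
    (by rwa [← orient_rotate]) (by rw [orient_rotate, orient_swap_left]; linarith)
  rw [orient_swap_left] at h; linarith

lemma ConvexPos.orient_pos_trans (hconv : ConvexPos p) {t a b c : V}
    (hab : 0 < orient p t a b) (hbc : 0 < orient p t b c) : 0 < orient p t a c := by
  have h := hconv.orient_neg_of_pos_of_pos (a := c) (b := a) (c := b) (d := t) hab
    (by rwa [orient_rotate])
  rw [← orient_rotate, orient_swap_right] at h; linarith

lemma ConvexPos.orient_pos_of_orient_pos (hconv : ConvexPos p) {t a b c : V}
    (hab : 0 < orient p t a b) (hbc : 0 < orient p t b c) : 0 < orient p a b c := by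
  have h := hconv.orient_neg_of_pos_of_pos (a := a) (b := c) (c := t) (d := b)
    (by rwa [← orient_rotate]) (by rwa [← orient_rotate])
  rw [orient_swap_right] at h; linarith

lemma ConvexPos.segCross (hconv : ConvexPos p) {u v a b : V}
    (ha : 0 < orient p u v a) (hb : orient p u v b < 0) :
    SegCross (p a) (p b) (p u) (p v) := by
  obtain ⟨hu, hv⟩ := hconv.orient_neg_and_orient_pos ha hb
  have hden : orient p a b v - orient p a b u = orient p u v a - orient p u v b := by
    unfold orient det2; ring
  have hpos : 0 < orient p u v a - orient p u v b := by linarith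
  -- the intersection of the lines `ab` and `uv`, a convex combination of `p a, p b` and, by
  -- `det2_smul_sub_det2_smul`, of `p u, p v`
  refine ⟨(orient p u v a - orient p u v b)⁻¹ •
    (orient p u v a • p b - orient p u v b • p a), ?_, ?_⟩
  · refine ⟨-orient p u v b / (orient p u v a - orient p u v b),
      orient p u v a / (orient p u v a - orient p u v b), div_pos (by linarith) hpos,
      div_pos ha hpos, by field_simp; ring, ?_⟩
    rw [div_eq_inv_mul, div_eq_inv_mul, mul_smul, mul_smul, ← smul_add, neg_smul]
    abel_nf
  · refine ⟨orient p a b v / (orient p u v a - orient p u v b),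
      -orient p a b u / (orient p u v a - orient p u v b), div_pos hv hpos,
      div_pos (by linarith) hpos, by field_simp; linarith, ?_⟩
    rw [div_eq_inv_mul, div_eq_inv_mul, mul_smul, mul_smul, ← smul_add, neg_smul]
    unfold orient; rw [det2_smul_sub_det2_smul]; abel_nf

lemma EdgeCross.symm {e f : Sym2 V} (h : EdgeCross p e f) : EdgeCross p f e :=
  let ⟨u, v, x, y, he, hf, h⟩ := h; ⟨x, y, u, v, hf, he, h.symm⟩

lemma edgeCross_mk_iff {u v x y : V} :
    EdgeCross p s(u, v) s(x, y) ↔ SegCross (p u) (p v) (p x) (p y) := by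
  refine ⟨?_, fun h => ⟨u, v, x, y, rfl, rfl, h⟩⟩
  rintro ⟨u', v', x', y', he, hf, h⟩
  have h' : SegCross (p u) (p v) (p x') (p y') := by
    rcases Sym2.eq_iff.mp he with ⟨rfl, rfl⟩ | ⟨rfl, rfl⟩
    exacts [h, h.swap_left]
  rcases Sym2.eq_iff.mp hf with ⟨rfl, rfl⟩ | ⟨rfl, rfl⟩
  exacts [h', h'.symm.swap_left.symm]

lemma GenPos.orient_pos_neg_of_segCross (hgen : GenPos p) {u v x y : V} (huv : u ≠ v)
    (hxy : x ≠ y) (hne : s(u, v) ≠ s(x, y)) (h : SegCross (p u) (p v) (p x) (p y)) :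
    0 < orient p u v x ∧ orient p u v y < 0 ∨ orient p u v x < 0 ∧ 0 < orient p u v y := by
  obtain ⟨q, hquv, hqxy⟩ := h
  obtain ⟨s, t, -, -, hq⟩ := det2_of_mem_openSegment (p u) (p v) hquv
  obtain ⟨s', t', hs', ht', hq'⟩ := det2_of_mem_openSegment (p u) (p v) hqxy
  have hsum : s' * orient p u v x + t' * orient p u v y = 0 := by
    have h0 := orient_self_outer (p := p) u v
    have h1 := orient_self_right (p := p) u v
    unfold orient at *
    rw [h0, h1] at hq
    linarith
  by_cases hx : orient p u v x = 0
  · have hy : orient p u v y = 0 := by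
      rw [hx, mul_zero, zero_add] at hsum
      exact (mul_eq_zero.mp hsum).resolve_left ht'.ne'
    exfalso; apply hne
    rcases hgen.eq_or_eq_of_orient_eq_zero huv hx with rfl | rfl <;>
      rcases hgen.eq_or_eq_of_orient_eq_zero huv hy with rfl | rfl
    all_goals first | exact absurd rfl hxy | rfl | exact Sym2.eq_swap
  · rcases lt_or_gt_of_ne hx with hx | hx
    · exact Or.inr ⟨hx, by nlinarith⟩
    · exact Or.inl ⟨hx, by nlinarith⟩

lemma exists_edgeCross_of_precoloredSaturated {k : ℕ} {G : SimpleGraph V}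
    {φ : Sym2 V → Fin k} (hφ : CrossingFree G p φ) (hsat : PrecoloredSaturated G p φ)
    {u v : V} (huv : u ≠ v) (hadj : ¬ G.Adj u v) (c : Fin k) :
    ∃ f ∈ G.edgeSet, φ f = c ∧ EdgeCross p s(u, v) f := by
  have := hsat u v huv hadj c
  simp only [CrossingFree, not_forall, not_not, exists_prop] at this
  obtain ⟨e, he, f, hf, hef, hcol, hcross⟩ := this
  have hG : ∀ g ∈ (G ⊔ SimpleGraph.fromEdgeSet {s(u, v)}).edgeSet, g ≠ s(u, v) →
      g ∈ G.edgeSet := by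
    intro g hg hne
    simp only [SimpleGraph.edgeSet_sup, SimpleGraph.edgeSet_fromEdgeSet, Set.mem_union,
      Set.mem_sdiff, Set.mem_singleton_iff] at hg
    tauto
  by_cases he' : e = s(u, v) <;> by_cases hf' : f = s(u, v)
  · exact absurd (he'.trans hf'.symm) hef
  · subst he'
    exact ⟨f, hG f hf hf', by simpa [hf'] using hcol.symm, hcross⟩
  · subst hf'
    exact ⟨e, hG e he he', by simpa [he'] using hcol, hcross.symm⟩
  · simp only [he', hf', if_false] at hcol
    exact absurd hcross (hφ e (hG e he he') f (hG f hf hf') hef hcol)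

def IsChord (p : V → Pt) (W : Finset V) (a b : V) : Prop :=
  a ∈ W ∧ b ∈ W ∧ (∃ w ∈ W, 0 < orient p a b w) ∧ ∃ w ∈ W, orient p a b w < 0

namespace IsChord

variable {W : Finset V} {a b : V}

lemma ne (h : IsChord p W a b) : a ≠ b := by
  rintro rfl
  obtain ⟨-, -, ⟨w, -, hw⟩, -⟩ := h
  simp at hw

lemma symm (h : IsChord p W a b) : IsChord p W b a := by
  obtain ⟨ha, hb, ⟨w, hw, hpos⟩, ⟨w', hw', hneg⟩⟩ := h
  refine ⟨hb, ha, ⟨w', hw', ?_⟩, ⟨w, hw, ?_⟩⟩ <;> rw [orient_swap_left] <;> linarith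

lemma mono {W' : Finset V} (hW : W ⊆ W') (h : IsChord p W a b) : IsChord p W' a b := by
  obtain ⟨ha, hb, ⟨w, hw, hpos⟩, ⟨w', hw', hneg⟩⟩ := h
  exact ⟨hW ha, hW hb, ⟨w, hW hw, hpos⟩, ⟨w', hW hw', hneg⟩⟩

end IsChord

lemma ConvexPos.isChord (hconv : ConvexPos p) {W : Finset V} {u v a b : V} (hu : u ∈ W)
    (hv : v ∈ W) (ha : a ∈ W) (hb : b ∈ W) (hua : 0 < orient p u v a)
    (hub : orient p u v b < 0) : IsChord p W a b :=
  have h := hconv.orient_neg_and_orient_pos hua hub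
  ⟨ha, hb, ⟨v, hv, h.2⟩, ⟨u, hu, h.1⟩⟩

lemma GenPos.orient_pos_or_orient_pos_of_isChord (hgen : GenPos p) {x y u v : V}
    (hxy : x ≠ y) {T : Finset V} (hT : ∀ w ∈ T, 0 ≤ orient p x y w)
    (huv : IsChord p T u v) :
    0 < orient p x y u ∨ 0 < orient p x y v := by
  by_contra! h
  obtain ⟨hu, hv, ⟨w, hwT, hw⟩, ⟨w', hw'T, hw'⟩⟩ := huv
  have hw0 := hT w hwT
  have hw'0 := hT w' hw'T
  rcases hgen.eq_or_eq_of_orient_eq_zero hxy (le_antisymm h.1 (hT u hu)) with rfl | rfl <;>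
    rcases hgen.eq_or_eq_of_orient_eq_zero hxy (le_antisymm h.2 (hT v hv)) with rfl | rfl
  · simp at hw
  · linarith
  · rw [orient_swap_left] at hw; linarith
  · simp at hw

lemma isOuterEdge_mk_iff {a b : V} :
    IsOuterEdge p s(a, b) ↔ (∀ w, w ≠ a → w ≠ b → 0 < orient p a b w) ∨
      ∀ w, w ≠ a → w ≠ b → orient p a b w < 0 := by
  refine ⟨?_, fun h => ⟨a, b, rfl, h⟩⟩
  rintro ⟨u, v, huv, h⟩
  rcases Sym2.eq_iff.mp huv with ⟨rfl, rfl⟩ | ⟨rfl, rfl⟩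
  · exact h
  · refine h.symm.imp ?_ ?_ <;> intro h w hwa hwb <;> rw [orient_swap_left] <;>
      linarith [h w hwb hwa, show orient p b a w = det2 (p b) (p a) (p w) from rfl]

lemma GenPos.isChord_univ_iff [Fintype V] (hgen : GenPos p) {a b : V} (hab : a ≠ b) :
    IsChord p Finset.univ a b ↔ ¬ IsOuterEdge p s(a, b) := by
  have hne : ∀ w, w ≠ a → w ≠ b → orient p a b w ≠ 0 :=
    fun w hwa hwb => hgen.orient_ne_zero hab (Ne.symm hwa) (Ne.symm hwb)
  simp only [isOuterEdge_mk_iff, IsChord, Finset.mem_univ, true_and]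
  push Not
  constructor
  · rintro ⟨⟨w, hw⟩, ⟨w', hw'⟩⟩
    have h := ne_of_orient_ne_zero hw.ne'
    have h' := ne_of_orient_ne_zero hw'.ne
    exact ⟨⟨w', h'.2.1.symm, h'.2.2.symm, hw'.le⟩, ⟨w, h.2.1.symm, h.2.2.symm, hw.le⟩⟩
  · rintro ⟨⟨w', hwa', hwb', hw'⟩, ⟨w, hwa, hwb, hw⟩⟩
    exact ⟨⟨w, lt_of_le_of_ne hw (hne w hwa hwb).symm⟩,
      ⟨w', lt_of_le_of_ne hw' (hne w' hwa' hwb')⟩⟩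

lemma Finset.exists_fin_enum_of_strictTotal {α : Type*} (s : Finset α) {m : ℕ}
    (hs : s.card = m) (r : α → α → Prop) (irrefl : ∀ a ∈ s, ¬ r a a)
    (trans : ∀ a ∈ s, ∀ b ∈ s, ∀ c ∈ s, r a b → r b c → r a c)
    (total : ∀ a ∈ s, ∀ b ∈ s, a ≠ b → r a b ∨ r b a) :
    ∃ f : Fin m → α, (∀ i, f i ∈ s) ∧ ∀ i j, i < j → r (f i) (f j) := by
  let R : s → s → Prop := fun a b => r a b
  have : IsStrictTotalOrder s R :=
    { trichotomous := fun a b hab hba => by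
        by_contra hne
        exact (total a a.2 b b.2 (fun h => hne (Subtype.ext h))).elim hab hba
      irrefl := fun a => irrefl a a.2
      trans := fun a b c => trans a a.2 b b.2 c c.2 }
  let := linearOrderOfSTO R
  let e := (Finset.univ : Finset s).orderEmbOfFin (k := m) (by simpa using hs)
  exact ⟨fun i => e i, fun i => (e i).2, fun i j hij => e.strictMono hij⟩

lemma exists_convex_pentagon (hgen : GenPos p) (hconv : ConvexPos p) {T : Finset V}
    (hT : 5 ≤ T.card) : ∃ q : Fin 5 → V, (∀ i, q i ∈ T) ∧
      ∀ i j k : Fin 5, i < j → j < k → 0 < orient p (q i) (q j) (q k) := by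
  obtain ⟨t, ht⟩ := Finset.card_pos.mp (by omega : 0 < T.card)
  obtain ⟨R, hR, hRcard⟩ := Finset.exists_subset_card_eq (s := T.erase t) (n := 4)
    (by rw [Finset.card_erase_of_mem ht]; omega)
  have hRt : ∀ a ∈ R, a ≠ t := fun a ha => Finset.ne_of_mem_erase (hR ha)
  -- sort the four other points by their angle as seen from `t`
  obtain ⟨f, hfR, hf⟩ := R.exists_fin_enum_of_strictTotal hRcard
    (fun a b => 0 < orient p t a b) (by simp)
    (fun _ _ _ _ _ _ => hconv.orient_pos_trans) (by
      intro a ha b hb hab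
      have h := hgen.orient_ne_zero (hRt a ha).symm (hRt b hb).symm hab
      rw [orient_swap_right t b a]
      rcases lt_or_gt_of_ne h with h | h
      · exact Or.inr (by linarith)
      · exact Or.inl h)
  refine ⟨Fin.cons t f, Fin.cases ht fun i => (Finset.mem_erase.mp (hR (hfR i))).2, ?_⟩
  intro i j k hij hjk
  obtain ⟨j, rfl⟩ := Fin.exists_succ_eq.mpr (ne_of_gt (lt_of_le_of_lt (Fin.zero_le i) hij))
  obtain ⟨k, rfl⟩ := Fin.exists_succ_eq.mpr (ne_of_gt (lt_trans (Fin.succ_pos j) hjk))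
  rw [Fin.succ_lt_succ_iff] at hjk
  cases i using Fin.cases with
  | zero => simpa using hf j k hjk
  | succ i =>
    rw [Fin.succ_lt_succ_iff] at hij
    simpa using hconv.orient_pos_of_orient_pos (hf i j hij) (hf j k hjk)

section Coloring

variable {k : ℕ} {G : SimpleGraph V} {φ : Sym2 V → Fin k}

noncomputable def chords [Fintype V] (G : SimpleGraph V) (p : V → Pt) (φ : Sym2 V → Fin k)
    (c : Fin k) (W : Finset V) : Finset (Sym2 V) :=
  Finset.univ.filter fun e => ∃ a b, e = s(a, b) ∧ G.Adj a b ∧ φ e = c ∧ IsChord p W a b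

lemma mk_mem_chords_iff [Fintype V] {c : Fin k} {W : Finset V} {a b : V} :
    s(a, b) ∈ chords G p φ c W ↔ G.Adj a b ∧ φ s(a, b) = c ∧ IsChord p W a b := by
  simp only [chords, Finset.mem_filter, Finset.mem_univ, true_and]
  constructor
  · rintro ⟨x, y, hxy, hadj, hc, hch⟩
    rcases Sym2.eq_iff.mp hxy with ⟨rfl, rfl⟩ | ⟨rfl, rfl⟩
    exacts [⟨hadj, hc, hch⟩, ⟨hadj.symm, hc, hch.symm⟩]
  · rintro ⟨hadj, hc, hch⟩
    exact ⟨a, b, rfl, hadj, hc, hch⟩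

lemma GenPos.setOf_inner_eq_chords_univ [Fintype V] (hgen : GenPos p) (c : Fin k) :
    {e | e ∈ G.edgeSet ∧ φ e = c ∧ ¬ IsOuterEdge p e} =
      (chords G p φ c Finset.univ : Set (Sym2 V)) := by
  ext e
  induction e using Sym2.ind with | h a b => ?_
  simp only [Set.mem_ofPred_eq, Finset.mem_coe, mk_mem_chords_iff, SimpleGraph.mem_edgeSet]
  exact and_congr_right fun hadj => and_congr_right fun _ => (hgen.isChord_univ_iff hadj.ne).symm

def NonEdgesCrossed (G : SimpleGraph V) (p : V → Pt) (φ : Sym2 V → Fin k) (c : Fin k)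
    (W : Finset V) : Prop :=
  ∀ u ∈ W, ∀ v ∈ W, u ≠ v → ¬ G.Adj u v →
    ∃ a ∈ W, ∃ b ∈ W, G.Adj a b ∧ φ s(a, b) = c ∧
      0 < orient p u v a ∧ orient p u v b < 0

lemma nonEdgesCrossed_univ [Fintype V] (hgen : GenPos p) (hφ : CrossingFree G p φ)
    (hsat : PrecoloredSaturated G p φ) (c : Fin k) : NonEdgesCrossed G p φ c Finset.univ := by
  intro u _ v _ huv hadj
  obtain ⟨f, hf, hfc, hcross⟩ := exists_edgeCross_of_precoloredSaturated hφ hsat huv hadj c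
  induction f using Sym2.ind with | h x y => ?_
  have hxy : G.Adj x y := hf
  have hne : s(u, v) ≠ s(x, y) := fun h => hadj (by rwa [← SimpleGraph.mem_edgeSet, h])
  rcases hgen.orient_pos_neg_of_segCross huv hxy.ne hne (edgeCross_mk_iff.mp hcross) with
    ⟨hx, hy⟩ | ⟨hx, hy⟩
  · exact ⟨x, Finset.mem_univ _, y, Finset.mem_univ _, hxy, hfc, hx, hy⟩
  · exact ⟨y, Finset.mem_univ _, x, Finset.mem_univ _, hxy.symm, Sym2.eq_swap ▸ hfc, hy, hx⟩

lemma NonEdgesCrossed.adj_and_ne_of_chords_eq_empty [Fintype V] {c : Fin k} {W : Finset V}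
    (hW : NonEdgesCrossed G p φ c W) (hconv : ConvexPos p) (hempty : chords G p φ c W = ∅)
    {u v : V} (huv : IsChord p W u v) : G.Adj u v ∧ φ s(u, v) ≠ c := by
  have hnot : ∀ a b, G.Adj a b → φ s(a, b) = c → ¬ IsChord p W a b := fun a b h1 h2 h3 => by
    simpa [hempty] using mk_mem_chords_iff.mpr ⟨h1, h2, h3⟩
  have hadj : G.Adj u v := by
    by_contra hnadj
    obtain ⟨a, ha, b, hb, hab, habc, hua, hub⟩ := hW u huv.1 v huv.2.1 huv.ne hnadj
    exact hnot a b hab habc (hconv.isChord huv.1 huv.2.1 ha hb hua hub)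
  exact ⟨hadj, fun hc => hnot u v hadj hc huv⟩

lemma ConvexPos.color_diagonal_ne (hconv : ConvexPos p) (hφ : CrossingFree G p φ) {a b c d : V}
    (habc : 0 < orient p a b c) (hacd : 0 < orient p a c d) (hac : G.Adj a c)
    (hbd : G.Adj b d) : φ s(a, c) ≠ φ s(b, d) := by
  intro heq
  have hcross := hconv.segCross (u := a) (v := c) (a := d) (b := b) hacd
    (by rw [orient_swap_right]; linarith)
  obtain ⟨hab, -, hbc⟩ := ne_of_orient_ne_zero habc.ne'
  have hne : s(a, c) ≠ s(b, d) := by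
    rw [Ne, Sym2.eq_iff]; rintro (⟨h, -⟩ | ⟨-, h⟩)
    exacts [hab h, hbc h.symm]
  exact hφ _ hac _ hbd hne heq (edgeCross_mk_iff.mpr hcross.swap_left.symm)

end Coloring

lemma Fin.five_cycle_not_two_colorable (f : Fin 5 → Fin 3) (c : Fin 3) (hc : ∀ i, f i ≠ c)
    (hf : ∀ i, f i ≠ f (i + 1)) : False := by
  have := hc 0; have := hc 1; have := hc 2; have := hc 3; have := hc 4
  have : f 0 ≠ f 1 := hf 0; have : f 1 ≠ f 2 := hf 1; have : f 2 ≠ f 3 := hf 2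
  have : f 3 ≠ f 4 := hf 3; have : f 4 ≠ f 0 := hf 4
  simp only [Fin.ext_iff, ne_eq] at *
  omega

section Thickness3

variable {G : SimpleGraph V} {φ : Sym2 V → Fin 3} {c : Fin 3}

lemma card_le_four_of_forall_isChord (hgen : GenPos p) (hconv : ConvexPos p)
    (hφ : CrossingFree G p φ) {T : Finset V}
    (hT : ∀ u v, IsChord p T u v → G.Adj u v ∧ φ s(u, v) ≠ c) : T.card ≤ 4 := by
  by_contra! h
  obtain ⟨q, hqT, hq⟩ := exists_convex_pentagon hgen hconv h
  have hrot : ∀ a b c : Fin 5, a < b → b < c → 0 < orient p (q a) (q b) (q c) ∧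
      0 < orient p (q b) (q c) (q a) ∧ 0 < orient p (q c) (q a) (q b) := fun a b c hab hbc =>
    have h := hq a b c hab hbc
    ⟨h, by rwa [← orient_rotate], by rwa [orient_rotate]⟩
  -- `q i, q (i+1), q (i+2), q (i+3)` is a convex quadrilateral, so the diagonals
  -- `q i q (i+2)` and `q (i+1) q (i+3)` cross
  have quad : ∀ i : Fin 5, 0 < orient p (q i) (q (i + 1)) (q (i + 2)) ∧
      0 < orient p (q i) (q (i + 2)) (q (i + 3)) := by
    intro i
    fin_cases i
    exacts [⟨(hrot 0 1 2 (by decide) (by decide)).1, (hrot 0 2 3 (by decide) (by decide)).1⟩,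
      ⟨(hrot 1 2 3 (by decide) (by decide)).1, (hrot 1 3 4 (by decide) (by decide)).1⟩,
      ⟨(hrot 2 3 4 (by decide) (by decide)).1, (hrot 0 2 4 (by decide) (by decide)).2.1⟩,
      ⟨(hrot 0 3 4 (by decide) (by decide)).2.1, (hrot 0 1 3 (by decide) (by decide)).2.2⟩,
      ⟨(hrot 0 1 4 (by decide) (by decide)).2.2, (hrot 1 2 4 (by decide) (by decide)).2.2⟩]
  have diag : ∀ i, G.Adj (q i) (q (i + 2)) ∧ φ s(q i, q (i + 2)) ≠ c := fun i =>
    hT _ _ ⟨hqT _, hqT _, ⟨q (i + 3), hqT _, (quad i).2⟩,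
      ⟨q (i + 1), hqT _, by rw [orient_swap_right]; linarith [(quad i).1]⟩⟩
  refine Fin.five_cycle_not_two_colorable (fun i => φ s(q i, q (i + 2))) c
    (fun i => (diag i).2) fun i => ?_
  have h3 : i + 1 + 2 = i + 3 := by rw [add_assoc]; rfl
  have := hconv.color_diagonal_ne hφ (quad i).1 (quad i).2 (diag i).1 (h3 ▸ (diag (i + 1)).1)
  rwa [h3]

end Thickness3

noncomputable def posSide (p : V → Pt) (W : Finset V) (a b : V) : Finset V :=
  W.filter fun w => 0 < orient p a b w

section MinimalChord

variable {k : ℕ} {G : SimpleGraph V} {φ : Sym2 V → Fin k} {c : Fin k} {W : Finset V}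
  {x y : V}

def IsMinimalChord (G : SimpleGraph V) (p : V → Pt) (φ : Sym2 V → Fin k) (c : Fin k)
    (W : Finset V) (x y : V) : Prop :=
  G.Adj x y ∧ φ s(x, y) = c ∧ IsChord p W x y ∧
    ∀ a b, G.Adj a b → φ s(a, b) = c → IsChord p W a b →
      (posSide p W x y).card ≤ (posSide p W a b).card

lemma IsMinimalChord.not_isChord (hmin : IsMinimalChord G p φ c W x y)
    (hconv : ConvexPos p) (hφ : CrossingFree G p φ) {a b : V}
    (hS : a ∈ posSide p W x y ∨ b ∈ posSide p W x y) (hab : G.Adj a b)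
    (habc : φ s(a, b) = c) : ¬ IsChord p W a b := by
  intro hch
  wlog haS : a ∈ posSide p W x y generalizing a b
  · exact this hS.symm hab.symm (Sym2.eq_swap ▸ habc) hch.symm (hS.resolve_left haS)
  obtain ⟨hxy, hxyc, -, hmin⟩ := hmin
  obtain ⟨-, hxa⟩ := Finset.mem_filter.mp haS
  have hsmaller : ∀ a' b', G.Adj a' b' → φ s(a', b') = c → IsChord p W a' b' →
      posSide p W a' b' ⊆ (posSide p W x y).erase a → False := fun a' b' h1 h2 h3 hsub => by
    have := (Finset.card_le_card hsub).trans_lt (Finset.card_erase_lt_of_mem haS)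
    exact absurd (hmin a' b' h1 h2 h3) (not_le.mpr this)
  by_cases hxb : orient p x y b < 0
  · obtain ⟨-, hxa', hya⟩ := ne_of_orient_ne_zero hxa.ne'
    have hne : s(a, b) ≠ s(x, y) := by
      rw [Ne, Sym2.eq_iff]; rintro (⟨h, -⟩ | ⟨h, -⟩)
      exacts [hxa' h.symm, hya h.symm]
    exact hφ _ hab _ hxy hne (habc.trans hxyc.symm)
      (edgeCross_mk_iff.mpr (hconv.segCross hxa hxb))
  push Not at hxb
  -- `ab` lies strictly above `xy`, so it cannot separate two points on or below `xy`: one of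
  -- its sides lies in `posSide p W x y \ {a}`
  by_cases hside : ∀ w ∈ W, orient p x y w ≤ 0 → 0 ≤ orient p a b w
  · refine hsmaller b a hab.symm (Sym2.eq_swap ▸ habc) hch.symm fun w hw => ?_
    obtain ⟨hwW, hw⟩ := Finset.mem_filter.mp hw
    rw [orient_swap_left] at hw
    refine Finset.mem_erase.mpr ⟨by rintro rfl; simp at hw, Finset.mem_filter.mpr ⟨hwW, ?_⟩⟩
    by_contra! h
    linarith [hside w hwW h]
  · push Not at hside
    obtain ⟨w', hw'W, hw'xy, hw'ab⟩ := hside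
    refine hsmaller a b hab habc hch fun w hw => ?_
    obtain ⟨hwW, hw⟩ := Finset.mem_filter.mp hw
    refine Finset.mem_erase.mpr ⟨by rintro rfl; simp at hw, Finset.mem_filter.mpr ⟨hwW, ?_⟩⟩
    have := (hconv.segCross hw hw'ab).symm.det2_pos_or_det2_pos (p x) (p y) hxa.le hxb
      (Or.inl hxa)
    exact this.resolve_right hw'xy.not_gt

lemma IsMinimalChord.nonEdgesCrossed_sdiff (hmin : IsMinimalChord G p φ c W x y)
    (hconv : ConvexPos p) (hφ : CrossingFree G p φ) (hW : NonEdgesCrossed G p φ c W) :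
    NonEdgesCrossed G p φ c (W \ posSide p W x y) := by
  intro u hu v hv huv hnadj
  obtain ⟨huW, -⟩ := Finset.mem_sdiff.mp hu
  obtain ⟨hvW, -⟩ := Finset.mem_sdiff.mp hv
  obtain ⟨a, ha, b, hb, hab, habc, hua, hub⟩ := hW u huW v hvW huv hnadj
  have hkey := hmin.not_isChord hconv hφ (a := a) (b := b)
  have hch := hconv.isChord huW hvW ha hb hua hub
  exact ⟨a, Finset.mem_sdiff.mpr ⟨ha, fun h => hkey (Or.inl h) hab habc hch⟩,
    b, Finset.mem_sdiff.mpr ⟨hb, fun h => hkey (Or.inr h) hab habc hch⟩, hab, habc, hua, hub⟩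

lemma card_chords_sdiff_posSide_lt [Fintype V] (hxy : G.Adj x y) (hxyc : φ s(x, y) = c)
    (hch : IsChord p W x y) :
    (chords G p φ c (W \ posSide p W x y)).card < (chords G p φ c W).card := by
  refine Finset.card_lt_card ⟨fun e he => ?_, fun h => ?_⟩
  · induction e using Sym2.ind with | h a b => ?_
    obtain ⟨hab, habc, hch'⟩ := mk_mem_chords_iff.mp he
    exact mk_mem_chords_iff.mpr ⟨hab, habc, hch'.mono Finset.sdiff_subset⟩
  · obtain ⟨-, -, ⟨w, hw, hpos⟩, -⟩ := (mk_mem_chords_iff.mp (h (mk_mem_chords_iff.mpr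
      ⟨hxy, hxyc, hch⟩))).2.2
    exact (Finset.mem_sdiff.mp hw).2 (Finset.mem_filter.mpr ⟨(Finset.mem_sdiff.mp hw).1, hpos⟩)

lemma exists_isMinimalChord [Fintype V] (hne : (chords G p φ c W).Nonempty) :
    ∃ x y, IsMinimalChord G p φ c W x y := by
  obtain ⟨e, he⟩ := hne
  induction e using Sym2.ind with | h a b => ?_
  obtain ⟨⟨x, y⟩, hxy, hmin⟩ := Finset.exists_min_image
    (Finset.univ.filter fun q : V × V =>
      G.Adj q.1 q.2 ∧ φ s(q.1, q.2) = c ∧ IsChord p W q.1 q.2)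
    (fun q => (posSide p W q.1 q.2).card) ⟨(a, b), by simpa using mk_mem_chords_iff.mp he⟩
  simp only [Finset.mem_filter, Finset.mem_univ, true_and] at hxy
  exact ⟨x, y, hxy.1, hxy.2.1, hxy.2.2,
    fun a b h1 h2 h3 => hmin (a, b) (by simpa using ⟨h1, h2, h3⟩)⟩

end MinimalChord

section Induction

variable {G : SimpleGraph V} {φ : Sym2 V → Fin 3} {c : Fin 3} {W : Finset V} {x y : V}

lemma IsMinimalChord.card_posSide_le_two (hmin : IsMinimalChord G p φ c W x y)
    (hgen : GenPos p) (hconv : ConvexPos p) (hφ : CrossingFree G p φ)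
    (hW : NonEdgesCrossed G p φ c W) : (posSide p W x y).card ≤ 2 := by
  set S := posSide p W x y
  set T := W.filter fun w => 0 ≤ orient p x y w
  have hkey : ∀ a b, a ∈ S ∨ b ∈ S → G.Adj a b → φ s(a, b) = c →
      ¬ IsChord p W a b := fun a b => hmin.not_isChord hconv hφ
  obtain ⟨hxy, -, hch, -⟩ := hmin
  have hST : S ⊆ (T.erase x).erase y := fun w hw => by
    obtain ⟨hwW, hw⟩ := Finset.mem_filter.mp hw
    obtain ⟨-, hxw, hyw⟩ := ne_of_orient_ne_zero hw.ne'
    exact Finset.mem_erase.mpr ⟨hyw.symm, Finset.mem_erase.mpr ⟨hxw.symm,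
      Finset.mem_filter.mpr ⟨hwW, hw.le⟩⟩⟩
  have hxT : x ∈ T := Finset.mem_filter.mpr ⟨hch.1, by simp⟩
  have hyT : y ∈ (T.erase x) := Finset.mem_erase.mpr ⟨hxy.ne.symm,
    Finset.mem_filter.mpr ⟨hch.2.1, by simp⟩⟩
  have hcardT := Finset.card_le_card hST
  rw [Finset.card_erase_of_mem hyT, Finset.card_erase_of_mem hxT] at hcardT
  suffices T.card ≤ 4 by omega
  refine card_le_four_of_forall_isChord (c := c) hgen hconv hφ fun u v huv => ?_
  obtain ⟨huW, hu⟩ := Finset.mem_filter.mp huv.1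
  obtain ⟨hvW, hv⟩ := Finset.mem_filter.mp huv.2.1
  have huvS := hgen.orient_pos_or_orient_pos_of_isChord hxy.ne
    (fun w hw => (Finset.mem_filter.mp hw).2) huv
  have huvS' : u ∈ S ∨ v ∈ S := huvS.imp (fun h => Finset.mem_filter.mpr ⟨huW, h⟩)
    (fun h => Finset.mem_filter.mpr ⟨hvW, h⟩)
  have huvW : IsChord p W u v := huv.mono (Finset.filter_subset _ _)
  have hadj : G.Adj u v := by
    by_contra hnadj
    obtain ⟨a, ha, b, hb, hab, habc, hua, hub⟩ := hW u huW v hvW huv.ne hnadj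
    have := (hconv.segCross hua hub).symm.det2_pos_or_det2_pos (p x) (p y) hu hv huvS
    exact hkey a b (this.imp (fun h => Finset.mem_filter.mpr ⟨ha, h⟩)
      (fun h => Finset.mem_filter.mpr ⟨hb, h⟩)) hab habc (hconv.isChord huW hvW ha hb hua hub)
  exact ⟨hadj, fun hcol => hkey u v huvS' hadj hcol huvW⟩

theorem card_le_two_mul_card_chords_add_four [Fintype V] (hgen : GenPos p)
    (hconv : ConvexPos p) (hφ : CrossingFree G p φ) (hW : NonEdgesCrossed G p φ c W) :
    W.card ≤ 2 * (chords G p φ c W).card + 4 := by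
  induction W using Finset.strongInduction with
  | H W ih =>
  rcases (chords G p φ c W).eq_empty_or_nonempty with hempty | hne
  · have := card_le_four_of_forall_isChord hgen hconv hφ fun u v huv =>
      hW.adj_and_ne_of_chords_eq_empty hconv hempty huv
    omega
  obtain ⟨x, y, hmin⟩ := exists_isMinimalChord hne
  have ⟨hxy, hxyc, hch, _⟩ := hmin
  have hS : (posSide p W x y).Nonempty :=
    let ⟨w, hw, hpos⟩ := hch.2.2.1
    ⟨w, Finset.mem_filter.mpr ⟨hw, hpos⟩⟩
  have hsub : posSide p W x y ⊆ W := Finset.filter_subset _ _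
  have hrest := ih _ (Finset.sdiff_ssubset hsub hS)
    (hmin.nonEdgesCrossed_sdiff hconv hφ hW)
  have hS2 := hmin.card_posSide_le_two hgen hconv hφ hW
  have hlt := card_chords_sdiff_posSide_lt hxy hxyc hch
  rw [Finset.card_sdiff_of_subset hsub] at hrest
  have := Finset.card_le_card hsub
  omega

end Induction

end Drawing

theorem stmt7_general (n : ℕ)
    (G : SimpleGraph (Fin n)) (p : Fin n → Pt) (φ : Sym2 (Fin n) → Fin 3)
    (hgen : GenPos p) (hconv : ConvexPos p)
    (hφ : CrossingFree G p φ) (hsat : PrecoloredSaturated G p φ) :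
    ∀ c : Fin 3,
      2 * (({e : Sym2 (Fin n) | e ∈ G.edgeSet ∧ φ e = c ∧
          ¬ IsOuterEdge p e}.ncard : ℤ)) ≥ (n : ℤ) - 4 := by
  intro c
  have h := card_le_two_mul_card_chords_add_four hgen hconv hφ
    (nonEdgesCrossed_univ hgen hφ hsat c)
  rw [Finset.card_univ, Fintype.card_fin] at h
  rw [hgen.setOf_inner_eq_chords_univ c, Set.ncard_coe_finset]
  omega

/-- In a saturated precolored convex Θ^3-drawing on `n ≥ 4`
vertices, each color class contains at least `(n-4)/2` inner edges. -/
theorem stmt7 (n : ℕ) (hn : 4 ≤ n)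
    (G : SimpleGraph (Fin n)) (p : Fin n → Pt) (φ : Sym2 (Fin n) → Fin 3)
    (hgen : GenPos p) (hconv : ConvexPos p)
    (hφ : CrossingFree G p φ) (hsat : PrecoloredSaturated G p φ) :
    ∀ c : Fin 3,
      2 * (({e : Sym2 (Fin n) | e ∈ G.edgeSet ∧ φ e = c ∧
          ¬ IsOuterEdge p e}.ncard : ℤ)) ≥ (n : ℤ) - 4 :=
  stmt7_general n G p φ hgen hconv hφ hsat
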